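/- arXiv:2010.03153 — 2 statements merged into one kernel-verified Lean document; each statement's English description precedes it below -/
import Mathlib

section
/- Let m, γ, k, k_v > 0, 0 < δ ≤ M, T > 0, and f(r) = (k/2)(r − 1/2 − 1/(2r³)) for r > 0. Let p̂ : [0,T] × [0,1] → ℝ be continuously differentiable and g₁, g₂ : [0,T] → ℝ continuous. For i = 1,2 let uᵢ : [0,T] × [0,1] → ℝ be smooth with δ ≤ u_{ix} ≤ M on [0,T] × [0,1], satisfying: m u_{itt} + γ u_{ixxxx} − ∂_x( f(u_{ix}) + k_v u_{itx} ) + ∂_x p̂ = 0 on (0,T) × (0,1); uᵢ(t,0) = 0, u_{ixx}(t,0) = u_{ixx}(t,1) = 0; −γ u_{ixxx}(t,1) + f(u_{ix}(t,1)) + k_v u_{itx}(t,1) + p̂(t,1) = gᵢ(t) for t ∈ [0,T]; and with the same initial data u₁(0,·) = u₂(0,·), u_{1t}(0,·) = u_{2t}(0,·). Put u = u₁ − u₂. Then there exists a constant C* > 0 depending only on m, γ, k, k_v, T, δ, M such that for all t ∈ [0,T]: ∫₀¹ u_t(t)² dx + ∫₀¹ u_xx(t)² dx + ∫₀¹ u_x(t)²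 dx + ∫₀ᵗ∫₀¹ u_tx² dx dτ ≤ C* ∫₀ᵗ |g₁(τ) − g₂(τ)|² dτ. -/
open Set MeasureTheory

noncomputable def DX (F : ℝ × ℝ → ℝ) : ℝ × ℝ → ℝ := fun q => fderiv ℝ F q (0, 1)
noncomputable def DT (F : ℝ × ℝ → ℝ) : ℝ × ℝ → ℝ := fun q => fderiv ℝ F q (1, 0)
theorem contDiff_DX {F : ℝ × ℝ → ℝ} (hF : ContDiff ℝ (⊤ : ℕ∞) F) : ContDiff ℝ (⊤ : ℕ∞) (DX F) :=
  (hF.fderiv_right (by simp)).clm_apply contDiff_const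
theorem contDiff_DT {F : ℝ × ℝ → ℝ} (hF : ContDiff ℝ (⊤ : ℕ∞) F) : ContDiff ℝ (⊤ : ℕ∞) (DT F) :=
  (hF.fderiv_right (by simp)).clm_apply contDiff_const
theorem hasDerivAt_sliceX {F : ℝ × ℝ → ℝ} (hF : ContDiff ℝ (⊤ : ℕ∞) F) (t x : ℝ) :
    HasDerivAt (fun ξ => F (t, ξ)) (DX F (t, x)) x := by
  have h : HasFDerivAt F (fderiv ℝ F (t, x)) (t, x) :=
    (hF.differentiable (by simp) (t, x)).hasFDerivAt
  have h2 : HasDerivAt (fun ξ : ℝ => ((t, ξ) : ℝ × ℝ)) ((0:ℝ), (1:ℝ)) x :=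
    (hasDerivAt_const x t).prodMk (hasDerivAt_id x)
  exact h.comp_hasDerivAt x h2
theorem hasDerivAt_sliceT {F : ℝ × ℝ → ℝ} (hF : ContDiff ℝ (⊤ : ℕ∞) F) (t x : ℝ) :
    HasDerivAt (fun τ => F (τ, x)) (DT F (t, x)) t := by
  have h : HasFDerivAt F (fderiv ℝ F (t, x)) (t, x) :=
    (hF.differentiable (by simp) (t, x)).hasFDerivAt
  have h2 : HasDerivAt (fun τ : ℝ => ((τ, x) : ℝ × ℝ)) ((1:ℝ), (0:ℝ)) t :=
    (hasDerivAt_id t).prodMk (hasDerivAt_const t x)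
  exact h.comp_hasDerivAt t h2
theorem deriv_sliceX {F : ℝ × ℝ → ℝ} (hF : ContDiff ℝ (⊤ : ℕ∞) F) (t x : ℝ) :
    deriv (fun ξ => F (t, ξ)) x = DX F (t, x) := (hasDerivAt_sliceX hF t x).deriv
theorem deriv_sliceT {F : ℝ × ℝ → ℝ} (hF : ContDiff ℝ (⊤ : ℕ∞) F) (t x : ℝ) :
    deriv (fun τ => F (τ, x)) t = DT F (t, x) := (hasDerivAt_sliceT hF t x).deriv
theorem DX_sub {F G : ℝ × ℝ → ℝ} (hF : ContDiff ℝ (⊤ : ℕ∞) F) (hG : ContDiff ℝ (⊤ : ℕ∞) G) :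
    DX (fun q' => F q' - G q') = fun q => DX F q - DX G q := by
  funext q; unfold DX
  rw [fderiv_fun_sub (hF.differentiable (by simp) q) (hG.differentiable (by simp) q)]; simp
theorem DT_sub {F G : ℝ × ℝ → ℝ} (hF : ContDiff ℝ (⊤ : ℕ∞) F) (hG : ContDiff ℝ (⊤ : ℕ∞) G) :
    DT (fun q' => F q' - G q') = fun q => DT F q - DT G q := by
  funext q; unfold DT
  rw [fderiv_fun_sub (hF.differentiable (by simp) q) (hG.differentiable (by simp) q)]; simp
theorem DT_DX_comm {F : ℝ × ℝ → ℝ} (hF : ContDiff ℝ (⊤ : ℕ∞) F) : DT (DX F) = DX (DT F) := by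
  funext q
  have hdF : Differentiable ℝ (fderiv ℝ F) := (hF.fderiv_right (m := (⊤ : ℕ∞)) (by simp)).differentiable (by simp)
  have hsymm := second_derivative_symmetric
    (f := F) (f' := fderiv ℝ F) (f'' := fderiv ℝ (fderiv ℝ F) q)
    (fun y => ((hF.differentiable (by simp)) y).hasFDerivAt)
    ((hdF q).hasFDerivAt) ((0:ℝ),(1:ℝ)) ((1:ℝ),(0:ℝ))
  have hx : DT (DX F) q = fderiv ℝ (fderiv ℝ F) q (1,0) (0,1) := by
    unfold DT DX
    rw [fderiv_clm_apply (hdF q) (differentiableAt_const _)]; simp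
  have ht : DX (DT F) q = fderiv ℝ (fderiv ℝ F) q (0,1) (1,0) := by
    unfold DX DT
    rw [fderiv_clm_apply (hdF q) (differentiableAt_const _)]; simp
  rw [hx, ht, hsymm]

theorem leibniz {F : ℝ × ℝ → ℝ} (hF : ContDiff ℝ (⊤ : ℕ∞) F) (DTF : ℝ × ℝ → ℝ)
    (hDTF : ∀ t x, HasDerivAt (fun τ => F (τ, x)) (DTF (t, x)) t)
    (hDTFc : Continuous DTF) (t : ℝ) :
    HasDerivAt (fun τ => ∫ x in (0:ℝ)..1, F (τ, x)) (∫ x in (0:ℝ)..1, DTF (t, x)) t := by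
  obtain ⟨C, hC⟩ : ∃ C, ∀ q ∈ (Icc (t-1) (t+1) ×ˢ Icc (0:ℝ) 1), ‖DTF q‖ ≤ C :=
    (IsCompact.prod isCompact_Icc isCompact_Icc).exists_bound_of_continuousOn hDTFc.continuousOn
  have key := intervalIntegral.hasDerivAt_integral_of_dominated_loc_of_deriv_le
    (F := fun τ x => F (τ, x)) (F' := fun τ x => DTF (τ, x)) (x₀ := t)
    (a := (0:ℝ)) (b := 1) (μ := volume) (bound := fun _ => C) (Metric.ball_mem_nhds t one_pos)
    (Filter.Eventually.of_forall fun τ =>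
      ((hF.continuous.comp (by continuity : Continuous fun x : ℝ => ((τ, x) : ℝ×ℝ)))).aestronglyMeasurable)
    ((hF.continuous.comp (by continuity : Continuous fun x : ℝ => ((t, x) : ℝ×ℝ))).intervalIntegrable 0 1)
    ((hDTFc.comp (by continuity : Continuous fun x : ℝ => ((t, x) : ℝ×ℝ))).aestronglyMeasurable)
    (Filter.Eventually.of_forall fun x hx τ hτ => by
      apply hC
      constructor
      · have h1 := Metric.mem_ball.mp hτ
        have h2 : |τ - t| < 1 := by rwa [Real.dist_eq] at h1
        constructor <;> [linarith [(abs_lt.mp h2).1]; linarith [(abs_lt.mp h2).2]]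
      · have : x ∈ Set.Ioc (0:ℝ) 1 := by
          simpa [Set.uIoc_of_le (by norm_num : (0:ℝ) ≤ 1)] using hx
        exact ⟨this.1.le, this.2⟩)
    intervalIntegrable_const
    (Filter.Eventually.of_forall fun x _ τ _ => hDTF τ x)
  exact key.2

theorem ae_ne_one : ∀ᵐ x : ℝ ∂volume, x ≠ 1 := by
  have := measure_singleton (μ := (volume : Measure ℝ)) (1:ℝ)
  rw [ae_iff]; simpa using this

theorem integral_congr_Ioo {f g : ℝ → ℝ} (h : ∀ x ∈ Ioo (0:ℝ) 1, f x = g x) :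
    ∫ x in (0:ℝ)..1, f x = ∫ x in (0:ℝ)..1, g x := by
  apply intervalIntegral.integral_congr_ae
  filter_upwards [ae_ne_one] with x hx hmem
  apply h
  rw [Set.uIoc_of_le (by norm_num : (0:ℝ) ≤ 1)] at hmem
  exact ⟨hmem.1, lt_of_le_of_ne hmem.2 hx⟩

theorem intervalIntegrable_congr_Ioo {f g : ℝ → ℝ} (h : ∀ x ∈ Ioo (0:ℝ) 1, f x = g x)
    (hf : IntervalIntegrable f volume 0 1) : IntervalIntegrable g volume 0 1 := by
  rw [intervalIntegrable_iff] at hf ⊢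
  apply hf.congr
  rw [Set.uIoc_of_le (by norm_num : (0:ℝ) ≤ 1)]
  rw [Filter.EventuallyEq, ae_restrict_iff' measurableSet_Ioc]
  filter_upwards [ae_ne_one] with x hx hmem
  exact h x ⟨hmem.1, lt_of_le_of_ne hmem.2 hx⟩

theorem sq_integral_le {g : ℝ → ℝ} (hg : ContinuousOn g (Icc (0:ℝ) 1)) :
    (∫ x in (0:ℝ)..1, g x)^2 ≤ ∫ x in (0:ℝ)..1, (g x)^2 := by
  set c := ∫ x in (0:ℝ)..1, g x with hc
  have huIcc : uIcc (0:ℝ) 1 = Icc 0 1 := uIcc_of_le (by norm_num)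
  have hgi : IntervalIntegrable g volume 0 1 := by
    apply ContinuousOn.intervalIntegrable; rwa [huIcc]
  have hg2i : IntervalIntegrable (fun x => (g x)^2) volume 0 1 := by
    apply ContinuousOn.intervalIntegrable; rw [huIcc]; exact hg.pow 2
  have h0 : (0:ℝ) ≤ ∫ x in (0:ℝ)..1, (g x - c)^2 :=
    intervalIntegral.integral_nonneg (by norm_num) (fun x _ => by positivity)
  have hexp : ∫ x in (0:ℝ)..1, (g x - c)^2
      = (∫ x in (0:ℝ)..1, (g x)^2) - 2*c*c + c^2 := by
    rw [intervalIntegral.integral_congr (g := fun x => (g x)^2 - (2*c)*g x + c^2)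
      (fun x _ => by ring)]
    rw [intervalIntegral.integral_add ((hg2i.sub (hgi.const_mul (2*c)))) intervalIntegrable_const,
      intervalIntegral.integral_sub hg2i (hgi.const_mul (2*c)),
      intervalIntegral.integral_const_mul, intervalIntegral.integral_const]
    simp [← hc]
  nlinarith [h0, hexp]

theorem fLip {k δ M : ℝ} (hk : 0 < k) (hδ : 0 < δ) {a b : ℝ}
    (ha : a ∈ Icc δ M) (hb : b ∈ Icc δ M) :
    |(k/2)*(a - 1/2 - 1/(2*a^3)) - (k/2)*(b - 1/2 - 1/(2*b^3))|
      ≤ ((k/2)*(1 + 3*M^2/(2*δ^6))) * |a - b| := by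
  have ha0 : 0 < a := lt_of_lt_of_le hδ ha.1
  have hb0 : 0 < b := lt_of_lt_of_le hδ hb.1
  have key : (k/2)*(a - 1/2 - 1/(2*a^3)) - (k/2)*(b - 1/2 - 1/(2*b^3))
      = (k/2) * ((a-b) * (1 + (a^2+a*b+b^2)/(2*a^3*b^3))) := by
    field_simp; ring
  rw [key, abs_mul, abs_mul]
  have hd : δ^3 ≤ a^3 := pow_le_pow_left₀ hδ.le ha.1 3
  have hd2 : δ^3 ≤ b^3 := pow_le_pow_left₀ hδ.le hb.1 3
  have hSle : (a^2+a*b+b^2)/(2*a^3*b^3) ≤ 3*M^2/(2*δ^6) := by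
    apply div_le_div₀ (by positivity)
      (by nlinarith [ha.2, hb.2, ha0, hb0]) (by positivity)
      (by nlinarith [pow_pos hδ 3])
  have h1 : |k/2| = k/2 := abs_of_pos (by positivity)
  have h2 : |1 + (a^2+a*b+b^2)/(2*a^3*b^3)| = 1 + (a^2+a*b+b^2)/(2*a^3*b^3) :=
    abs_of_pos (by positivity)
  rw [h1, h2]
  calc k/2 * (|a-b| * (1 + (a^2+a*b+b^2)/(2*a^3*b^3)))
      ≤ k/2 * (|a-b| * (1 + 3*M^2/(2*δ^6))) := by
        apply mul_le_mul_of_nonneg_left _ (by positivity)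
        apply mul_le_mul_of_nonneg_left _ (abs_nonneg _)
        linarith
    _ = (k/2)*(1 + 3*M^2/(2*δ^6)) * |a-b| := by ring

theorem leibniz_sq {G : ℝ × ℝ → ℝ} (hG : ContDiff ℝ (⊤ : ℕ∞) G) (t : ℝ) :
    HasDerivAt (fun τ => ∫ x in (0:ℝ)..1, (G (τ, x))^2)
      (∫ x in (0:ℝ)..1, 2 * G (t, x) * DT G (t, x)) t := by
  apply leibniz (F := fun q => (G q)^2) (hG.pow 2)
    (DTF := fun q => 2 * G q * DT G q)
  · intro t x
    have := (hasDerivAt_sliceT hG t x).fun_pow 2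
    simpa using this
  · exact (continuous_const.mul hG.continuous).mul (contDiff_DT hG).continuous

-- derivative of a function that vanishes eventually near a point
theorem deriv_eventually_zero {f : ℝ → ℝ} {t : ℝ} (h : ∀ᶠ τ in nhds t, f τ = 0) :
    deriv f t = 0 := by
  have : f =ᶠ[nhds t] (fun _ => (0:ℝ)) := h
  rw [this.deriv_eq, deriv_const]


theorem amgm {ε : ℝ} (hε : 0 < ε) (a b : ℝ) : a*b ≤ ε*a^2 + b^2/(4*ε) := by
  have key : ε*a^2 + b^2/(4*ε) - a*b = (2*ε*a - b)^2/(4*ε) := by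
    field_simp; ring
  nlinarith [div_nonneg (sq_nonneg (2*ε*a - b)) (by positivity : (0:ℝ) ≤ 4*ε), key]

set_option maxHeartbeats 1000000 in
theorem energy_est (m γ k kv δ M : ℝ)
    (hk : 0 < k) (hkv : 0 < kv) (hδ : 0 < δ)
    (a₁ a₂ b₁ b₂ ψ χ χ' w1 w2 w3 w4 wtt wtt₁ wtt₂ w4₁ w4₂ pp : ℝ → ℝ) (Δg : ℝ)
    (ha₁ : Differentiable ℝ a₁) (ha₂ : Differentiable ℝ a₂)
    (hb₁ : Differentiable ℝ b₁) (hb₂ : Differentiable ℝ b₂)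
    (hψ : ∀ x, HasDerivAt ψ (χ x) x) (hχ : ∀ x, HasDerivAt χ (χ' x) x)
    (hw2 : ∀ x, HasDerivAt w2 (w3 x) x) (hw3 : ∀ x, HasDerivAt w3 (w4 x) x)
    (cχ' : Continuous χ') (cw4 : Continuous w4) (cwtt : Continuous wtt)
    (cw1 : Continuous w1)
    (hχeq : ∀ x, χ x = b₁ x - b₂ x)
    (hw1eq : ∀ x, w1 x = a₁ x - a₂ x)
    (hwtteq : ∀ x, wtt x = wtt₁ x - wtt₂ x)
    (hw4eq : ∀ x, w4 x = w4₁ x - w4₂ x)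
    (hbound₁ : ∀ x ∈ Icc (0:ℝ) 1, a₁ x ∈ Icc δ M)
    (hbound₂ : ∀ x ∈ Icc (0:ℝ) 1, a₂ x ∈ Icc δ M)
    (hpde₁ : ∀ x ∈ Ioo (0:ℝ) 1,
      deriv (fun ξ => (k/2)*(a₁ ξ - 1/2 - 1/(2*(a₁ ξ)^3)) + kv * b₁ ξ) x
        = m * wtt₁ x + γ * w4₁ x + pp x)
    (hpde₂ : ∀ x ∈ Ioo (0:ℝ) 1,
      deriv (fun ξ => (k/2)*(a₂ ξ - 1/2 - 1/(2*(a₂ ξ)^3)) + kv * b₂ ξ) x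
        = m * wtt₂ x + γ * w4₂ x + pp x)
    (hψ0 : ψ 0 = 0) (hw20 : w2 0 = 0) (hw21 : w2 1 = 0)
    (hbc : ((k/2)*(a₁ 1 - 1/2 - 1/(2*(a₁ 1)^3)) + kv * b₁ 1)
         - ((k/2)*(a₂ 1 - 1/2 - 1/(2*(a₂ 1)^3)) + kv * b₂ 1) = Δg + γ * w3 1) :
    m * (∫ x in (0:ℝ)..1, wtt x * ψ x) + γ * (∫ x in (0:ℝ)..1, w2 x * χ' x)
      + 2 * (∫ x in (0:ℝ)..1, w1 x * χ x) + (kv/2) * (∫ x in (0:ℝ)..1, (χ x)^2)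
    ≤ ((2*((k/2)*(1 + 3*M^2/(2*δ^6)))^2 + 8)/kv) * (∫ x in (0:ℝ)..1, (w1 x)^2)
      + (2/kv) * Δg^2 := by
  set L : ℝ := (k/2)*(1 + 3*M^2/(2*δ^6)) with hLdef
  have hL : 0 < L := by positivity
  clear_value L
  have huIcc : uIcc (0:ℝ) 1 = Icc 0 1 := uIcc_of_le (by norm_num)
  -- continuity facts
  have cψ : Continuous ψ := continuous_iff_continuousAt.mpr fun x => (hψ x).continuousAt
  have cχ : Continuous χ := continuous_iff_continuousAt.mpr fun x => (hχ x).continuousAt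
  have cw2 : Continuous w2 := continuous_iff_continuousAt.mpr fun x => (hw2 x).continuousAt
  have cw3 : Continuous w3 := continuous_iff_continuousAt.mpr fun x => (hw3 x).continuousAt
  -- the stress difference
  set Qt : ℝ → ℝ := fun ξ =>
      ((k/2)*(a₁ ξ - 1/2 - 1/(2*(a₁ ξ)^3)) + kv * b₁ ξ)
    - ((k/2)*(a₂ ξ - 1/2 - 1/(2*(a₂ ξ)^3)) + kv * b₂ ξ) with hQtdef
  set Δf : ℝ → ℝ := fun ξ =>
      (k/2)*(a₁ ξ - 1/2 - 1/(2*(a₁ ξ)^3)) - (k/2)*(a₂ ξ - 1/2 - 1/(2*(a₂ ξ)^3)) with hΔfdef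
  have fdiff : ∀ (a : ℝ → ℝ), Differentiable ℝ a → ∀ x : ℝ, a x ≠ 0 →
      DifferentiableAt ℝ (fun ξ => (k/2)*(a ξ - 1/2 - 1/(2*(a ξ)^3))) x := by
    intro a ha x hx
    have h3 : DifferentiableAt ℝ (fun ξ => 2*(a ξ)^3) x := ((ha x).pow 3).const_mul 2
    have hne : 2*(a x)^3 ≠ 0 := by
      intro hcon
      apply hx
      have := pow_eq_zero_iff (n := 3) (by norm_num) |>.mp (by linarith : (a x)^3 = 0)
      exact this
    exact (((ha x).sub_const (1/2)).sub ((differentiableAt_const 1).div h3 hne)).const_mul (k/2)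
  have ha₁ne : ∀ x ∈ Icc (0:ℝ) 1, a₁ x ≠ 0 :=
    fun x hx => ne_of_gt (lt_of_lt_of_le hδ (hbound₁ x hx).1)
  have ha₂ne : ∀ x ∈ Icc (0:ℝ) 1, a₂ x ≠ 0 :=
    fun x hx => ne_of_gt (lt_of_lt_of_le hδ (hbound₂ x hx).1)
  have hQdiff : ∀ x ∈ Icc (0:ℝ) 1, DifferentiableAt ℝ Qt x := by
    intro x hx
    exact ((fdiff a₁ ha₁ x (ha₁ne x hx)).add ((hb₁ x).const_mul kv)).sub
      ((fdiff a₂ ha₂ x (ha₂ne x hx)).add ((hb₂ x).const_mul kv))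
  have hQtc : ContinuousOn Qt (Icc 0 1) :=
    fun x hx => ((hQdiff x hx).continuousAt).continuousWithinAt
  -- PDE: the derivative of Qt on the interior
  have hQd : ∀ x ∈ Ioo (0:ℝ) 1, deriv Qt x = m * wtt x + γ * w4 x := by
    intro x hx
    have hIcc := Ioo_subset_Icc_self hx
    have hder : deriv Qt x
        = deriv (fun ξ => (k/2)*(a₁ ξ - 1/2 - 1/(2*(a₁ ξ)^3)) + kv * b₁ ξ) x
        - deriv (fun ξ => (k/2)*(a₂ ξ - 1/2 - 1/(2*(a₂ ξ)^3)) + kv * b₂ ξ) x := by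
      apply deriv_sub
      · exact (fdiff a₁ ha₁ x (ha₁ne x hIcc)).add ((hb₁ x).const_mul kv)
      · exact (fdiff a₂ ha₂ x (ha₂ne x hIcc)).add ((hb₂ x).const_mul kv)
    rw [hder, hpde₁ x hx, hpde₂ x hx, hwtteq x, hw4eq x]
    ring
  -- integrability of deriv Qt
  have hQint : IntervalIntegrable (fun x => deriv Qt x) volume 0 1 := by
    apply intervalIntegrable_congr_Ioo (f := fun x => m * wtt x + γ * w4 x)
    · intro x hx; exact (hQd x hx).symm
    · exact ((continuous_const.mul cwtt).add (continuous_const.mul cw4)).intervalIntegrable 0 1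
  -- IBP 1
  have IBP1 : ∫ x in (0:ℝ)..1, (deriv Qt x * ψ x + Qt x * χ x)
      = Qt 1 * ψ 1 - Qt 0 * ψ 0 := by
    apply intervalIntegral.integral_deriv_mul_eq_sub
    · intro x hx; rw [huIcc] at hx; exact (hQdiff x hx).hasDerivAt
    · intro x _; exact hψ x
    · exact hQint
    · exact cχ.intervalIntegrable 0 1
  -- IBP 2
  have IBP2 : ∫ x in (0:ℝ)..1, (w4 x * ψ x + w3 x * χ x)
      = w3 1 * ψ 1 - w3 0 * ψ 0 := by
    apply intervalIntegral.integral_deriv_mul_eq_sub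
    · intro x _; exact hw3 x
    · intro x _; exact hψ x
    · exact cw4.intervalIntegrable 0 1
    · exact cχ.intervalIntegrable 0 1
  -- IBP 3
  have IBP3 : ∫ x in (0:ℝ)..1, (w3 x * χ x + w2 x * χ' x)
      = w2 1 * χ 1 - w2 0 * χ 0 := by
    apply intervalIntegral.integral_deriv_mul_eq_sub
    · intro x _; exact hw2 x
    · intro x _; exact hχ x
    · exact cw3.intervalIntegrable 0 1
    · exact cχ'.intervalIntegrable 0 1
  -- integrable pieces
  have idQψ : IntervalIntegrable (fun x => deriv Qt x * ψ x) volume 0 1 := by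
    apply intervalIntegrable_congr_Ioo (f := fun x => (m * wtt x + γ * w4 x) * ψ x)
    · intro x hx; rw [hQd x hx]
    · exact (((continuous_const.mul cwtt).add (continuous_const.mul cw4)).mul cψ).intervalIntegrable 0 1
  have iQχ : IntervalIntegrable (fun x => Qt x * χ x) volume 0 1 := by
    apply ContinuousOn.intervalIntegrable; rw [huIcc]
    exact hQtc.mul cχ.continuousOn
  have hΔfc : ContinuousOn Δf (Icc 0 1) := by
    have : Δf = fun x => Qt x - kv * χ x := by
      funext x; rw [hχeq x, hQtdef, hΔfdef]; ring
    rw [this]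
    exact hQtc.sub ((continuous_const.mul cχ).continuousOn)
  have iΔfχ : IntervalIntegrable (fun x => Δf x * χ x) volume 0 1 := by
    apply ContinuousOn.intervalIntegrable; rw [huIcc]
    exact hΔfc.mul cχ.continuousOn
  have iχ2 : IntervalIntegrable (fun x => (χ x)^2) volume 0 1 :=
    (cχ.pow 2).intervalIntegrable 0 1
  have iw12 : IntervalIntegrable (fun x => (w1 x)^2) volume 0 1 :=
    (cw1.pow 2).intervalIntegrable 0 1
  have iwttψ : IntervalIntegrable (fun x => wtt x * ψ x) volume 0 1 :=
    (cwtt.mul cψ).intervalIntegrable 0 1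
  have iw4ψ : IntervalIntegrable (fun x => w4 x * ψ x) volume 0 1 :=
    (cw4.mul cψ).intervalIntegrable 0 1
  have iw3χ : IntervalIntegrable (fun x => w3 x * χ x) volume 0 1 :=
    (cw3.mul cχ).intervalIntegrable 0 1
  have iw2χ' : IntervalIntegrable (fun x => w2 x * χ' x) volume 0 1 :=
    (cw2.mul cχ').intervalIntegrable 0 1
  have iw1χ : IntervalIntegrable (fun x => w1 x * χ x) volume 0 1 :=
    (cw1.mul cχ).intervalIntegrable 0 1
  -- split IBP1
  have split1 : (∫ x in (0:ℝ)..1, deriv Qt x * ψ x) + (∫ x in (0:ℝ)..1, Qt x * χ x)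
      = Qt 1 * ψ 1 := by
    rw [← intervalIntegral.integral_add idQψ iQχ, IBP1, hψ0]; ring
  have eQψ : (∫ x in (0:ℝ)..1, deriv Qt x * ψ x)
      = m * (∫ x in (0:ℝ)..1, wtt x * ψ x) + γ * (∫ x in (0:ℝ)..1, w4 x * ψ x) := by
    rw [integral_congr_Ioo (g := fun x => m * (wtt x * ψ x) + γ * (w4 x * ψ x))
      (fun x hx => by rw [hQd x hx]; ring)]
    rw [intervalIntegral.integral_add (iwttψ.const_mul m) (iw4ψ.const_mul γ),
      intervalIntegral.integral_const_mul, intervalIntegral.integral_const_mul]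
  have eQχ : (∫ x in (0:ℝ)..1, Qt x * χ x)
      = (∫ x in (0:ℝ)..1, Δf x * χ x) + kv * (∫ x in (0:ℝ)..1, (χ x)^2) := by
    rw [intervalIntegral.integral_congr (g := fun x => Δf x * χ x + kv * (χ x)^2)
      (fun x _ => by rw [hQtdef]; simp only []; rw [hχeq x]; simp only [hΔfdef]; ring)]
    rw [intervalIntegral.integral_add iΔfχ (iχ2.const_mul kv),
      intervalIntegral.integral_const_mul]
  have split2 : (∫ x in (0:ℝ)..1, w4 x * ψ x) + (∫ x in (0:ℝ)..1, w3 x * χ x)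
      = w3 1 * ψ 1 := by
    rw [← intervalIntegral.integral_add iw4ψ iw3χ, IBP2, hψ0]; ring
  have split3 : (∫ x in (0:ℝ)..1, w3 x * χ x) + (∫ x in (0:ℝ)..1, w2 x * χ' x) = 0 := by
    rw [← intervalIntegral.integral_add iw3χ iw2χ', IBP3, hw20, hw21]; ring
  have hQt1 : Qt 1 = Δg + γ * w3 1 := hbc
  -- energy identity
  have EI : m * (∫ x in (0:ℝ)..1, wtt x * ψ x) + γ * (∫ x in (0:ℝ)..1, w2 x * χ' x)
      = Δg * ψ 1 - (∫ x in (0:ℝ)..1, Δf x * χ x) - kv * (∫ x in (0:ℝ)..1, (χ x)^2) := by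
    have h1 := split1
    rw [eQψ, eQχ, hQt1] at h1
    linear_combination h1 - γ * split2 + γ * split3
  -- bounds
  have hLip : ∀ x ∈ Icc (0:ℝ) 1, |Δf x| ≤ L * |w1 x| := by
    intro x hx
    rw [hLdef, hΔfdef]; simp only []
    rw [hw1eq x]
    exact fLip hk hδ (hbound₁ x hx) (hbound₂ x hx)
  have T1 : -(∫ x in (0:ℝ)..1, Δf x * χ x)
      ≤ (kv/8) * (∫ x in (0:ℝ)..1, (χ x)^2)
        + (2*L^2/kv) * (∫ x in (0:ℝ)..1, (w1 x)^2) := by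
    rw [← intervalIntegral.integral_neg]
    calc (∫ x in (0:ℝ)..1, -(Δf x * χ x))
        ≤ ∫ x in (0:ℝ)..1, ((kv/8) * (χ x)^2 + (2*L^2/kv) * (w1 x)^2) := by
          apply intervalIntegral.integral_mono_on (by norm_num) iΔfχ.neg
            ((iχ2.const_mul (kv/8)).add (iw12.const_mul (2*L^2/kv)))
          intro x hx
          simp only [Pi.neg_apply]
          have h1 : -(Δf x * χ x) ≤ |Δf x| * |χ x| := by
            rw [← abs_mul]; exact neg_le_abs _
          have h2 : |Δf x| * |χ x| ≤ (L * |w1 x|) * |χ x| :=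
            mul_le_mul_of_nonneg_right (hLip x hx) (abs_nonneg _)
          have h3 : |χ x| * (L * |w1 x|) ≤ (kv/8) * |χ x|^2 + (L*|w1 x|)^2/(4*(kv/8)) :=
            amgm (by positivity) _ _
          have h4 : (L*|w1 x|)^2/(4*(kv/8)) = (2*L^2/kv) * (w1 x)^2 := by
            rw [mul_pow, sq_abs]; field_simp; ring
          rw [h4, sq_abs] at h3
          have h5 : -(Δf x * χ x) ≤ L * |w1 x| * |χ x| := le_trans h1 h2
          have h7 : L * |w1 x| * |χ x| ≤ kv / 8 * (χ x) ^ 2 + 2 * L ^ 2 / kv * (w1 x) ^ 2 := by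
            rw [show L * |w1 x| * |χ x| = |χ x| * (L * |w1 x|) by ring]
            exact h3
          exact h5.trans h7
      _ = (kv/8) * (∫ x in (0:ℝ)..1, (χ x)^2)
          + (2*L^2/kv) * (∫ x in (0:ℝ)..1, (w1 x)^2) := by
          rw [intervalIntegral.integral_add (iχ2.const_mul (kv/8)) (iw12.const_mul (2*L^2/kv)),
            intervalIntegral.integral_const_mul, intervalIntegral.integral_const_mul]
  have T2 : 2 * (∫ x in (0:ℝ)..1, w1 x * χ x)
      ≤ (kv/8) * (∫ x in (0:ℝ)..1, (χ x)^2) + (8/kv) * (∫ x in (0:ℝ)..1, (w1 x)^2) := by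
    have : (2:ℝ) * (∫ x in (0:ℝ)..1, w1 x * χ x) = ∫ x in (0:ℝ)..1, 2 * (w1 x * χ x) := by
      rw [intervalIntegral.integral_const_mul]
    rw [this]
    calc (∫ x in (0:ℝ)..1, 2 * (w1 x * χ x))
        ≤ ∫ x in (0:ℝ)..1, ((kv/8) * (χ x)^2 + (8/kv) * (w1 x)^2) := by
          apply intervalIntegral.integral_mono_on (by norm_num) (iw1χ.const_mul 2)
            ((iχ2.const_mul (kv/8)).add (iw12.const_mul (8/kv)))
          intro x hx
          have h3 : χ x * (2 * w1 x) ≤ (kv/8) * (χ x)^2 + (2*w1 x)^2/(4*(kv/8)) :=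
            amgm (by positivity) _ _
          have h4 : (2*w1 x)^2/(4*(kv/8)) = (8/kv) * (w1 x)^2 := by field_simp; ring
          nlinarith [h3]
      _ = (kv/8) * (∫ x in (0:ℝ)..1, (χ x)^2) + (8/kv) * (∫ x in (0:ℝ)..1, (w1 x)^2) := by
          rw [intervalIntegral.integral_add (iχ2.const_mul (kv/8)) (iw12.const_mul (8/kv)),
            intervalIntegral.integral_const_mul, intervalIntegral.integral_const_mul]
  have hψ1 : ψ 1 = ∫ x in (0:ℝ)..1, χ x := by
    rw [intervalIntegral.integral_eq_sub_of_hasDerivAt (fun x _ => hψ x)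
      (cχ.intervalIntegrable 0 1), hψ0]
    ring
  have hψ1sq : (ψ 1)^2 ≤ ∫ x in (0:ℝ)..1, (χ x)^2 := by
    rw [hψ1]; exact sq_integral_le cχ.continuousOn
  have T3 : Δg * ψ 1 ≤ (2/kv) * Δg^2 + (kv/8) * (∫ x in (0:ℝ)..1, (χ x)^2) := by
    have h3 : ψ 1 * Δg ≤ (kv/8) * (ψ 1)^2 + Δg^2/(4*(kv/8)) := amgm (by positivity) _ _
    have h4 : Δg^2/(4*(kv/8)) = (2/kv) * Δg^2 := by field_simp; ring
    nlinarith [h3, hψ1sq]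
  have hχ2nn : 0 ≤ ∫ x in (0:ℝ)..1, (χ x)^2 :=
    intervalIntegral.integral_nonneg (by norm_num) (fun x _ => sq_nonneg _)
  -- conclusion
  have final := EI
  have hfrac : (2*L^2 + 8)/kv = 2*L^2/kv + 8/kv := by ring
  rw [hfrac]
  linarith [T1, T2, T3, final, mul_nonneg hkv.le hχ2nn]

set_option maxHeartbeats 3200000

/-- Continuous-dependence estimate (inequality (5.12) of Lemma 5.4, classical
form) for the viscoelastic beam problem with singular elastic response
f(r) = (k/2)(r − 1/2 − 1/(2r³)): the difference of two solutions with the same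
pressure term and initial data but different boundary forcings g₁, g₂ is
controlled in energy norm by the L² distance of the forcings. -/
theorem beam_continuous_dependence (m γ k kv T δ M : ℝ)
    (hm : 0 < m) (hγ : 0 < γ) (hk : 0 < k) (hkv : 0 < kv) (hT : 0 < T)
    (hδ : 0 < δ) (hδM : δ ≤ M) :
    ∃ Cstar > 0, ∀ (p : ℝ → ℝ → ℝ) (g₁ g₂ : ℝ → ℝ) (u₁ u₂ : ℝ → ℝ → ℝ),
      ContDiff ℝ 1 (Function.uncurry p) →
      Continuous g₁ → Continuous g₂ →
      ContDiff ℝ (⊤ : ℕ∞) (Function.uncurry u₁) → ContDiff ℝ (⊤ : ℕ∞) (Function.uncurry u₂) →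
      (∀ t ∈ Icc (0:ℝ) T, ∀ x ∈ Icc (0:ℝ) 1, deriv (u₁ t) x ∈ Icc δ M) →
      (∀ t ∈ Icc (0:ℝ) T, ∀ x ∈ Icc (0:ℝ) 1, deriv (u₂ t) x ∈ Icc δ M) →
      (∀ t ∈ Ioo (0:ℝ) T, ∀ x ∈ Ioo (0:ℝ) 1,
        m * deriv (fun τ => deriv (fun σ => u₁ σ x) τ) t +
          γ * deriv (deriv (deriv (deriv (u₁ t)))) x -
          deriv (fun ξ =>
            (k/2) * (deriv (u₁ t) ξ - 1/2 - 1/(2 * (deriv (u₁ t) ξ)^3)) +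
              kv * deriv (fun τ => deriv (u₁ τ) ξ) t) x +
          deriv (p t) x = 0) →
      (∀ t ∈ Ioo (0:ℝ) T, ∀ x ∈ Ioo (0:ℝ) 1,
        m * deriv (fun τ => deriv (fun σ => u₂ σ x) τ) t +
          γ * deriv (deriv (deriv (deriv (u₂ t)))) x -
          deriv (fun ξ =>
            (k/2) * (deriv (u₂ t) ξ - 1/2 - 1/(2 * (deriv (u₂ t) ξ)^3)) +
              kv * deriv (fun τ => deriv (u₂ τ) ξ) t) x +
          deriv (p t) x = 0) →
      (∀ t ∈ Icc (0:ℝ) T, u₁ t 0 = 0) → (∀ t ∈ Icc (0:ℝ) T, u₂ t 0 = 0) →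
      (∀ t ∈ Icc (0:ℝ) T, deriv (deriv (u₁ t)) 0 = 0) →
      (∀ t ∈ Icc (0:ℝ) T, deriv (deriv (u₁ t)) 1 = 0) →
      (∀ t ∈ Icc (0:ℝ) T, deriv (deriv (u₂ t)) 0 = 0) →
      (∀ t ∈ Icc (0:ℝ) T, deriv (deriv (u₂ t)) 1 = 0) →
      (∀ t ∈ Icc (0:ℝ) T,
        -γ * deriv (deriv (deriv (u₁ t))) 1 +
          (k/2) * (deriv (u₁ t) 1 - 1/2 - 1/(2 * (deriv (u₁ t) 1)^3)) +
          kv * deriv (fun τ => deriv (u₁ τ) 1) t + p t 1 = g₁ t) →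
      (∀ t ∈ Icc (0:ℝ) T,
        -γ * deriv (deriv (deriv (u₂ t))) 1 +
          (k/2) * (deriv (u₂ t) 1 - 1/2 - 1/(2 * (deriv (u₂ t) 1)^3)) +
          kv * deriv (fun τ => deriv (u₂ τ) 1) t + p t 1 = g₂ t) →
      (∀ x ∈ Icc (0:ℝ) 1, u₁ 0 x = u₂ 0 x) →
      (∀ x ∈ Icc (0:ℝ) 1, deriv (fun τ => u₁ τ x) 0 = deriv (fun τ => u₂ τ x) 0) →
      ∀ t ∈ Icc (0:ℝ) T,
        (∫ x in (0:ℝ)..1, (deriv (fun τ => u₁ τ x - u₂ τ x) t)^2) +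
          (∫ x in (0:ℝ)..1, (deriv (deriv (fun ξ => u₁ t ξ - u₂ t ξ)) x)^2) +
          (∫ x in (0:ℝ)..1, (deriv (fun ξ => u₁ t ξ - u₂ t ξ) x)^2) +
          (∫ τ in (0:ℝ)..t, ∫ x in (0:ℝ)..1,
            (deriv (fun σ => deriv (fun ξ => u₁ σ ξ - u₂ σ ξ) x) τ)^2) ≤
        Cstar * (∫ τ in (0:ℝ)..t, |g₁ τ - g₂ τ|^2) := by
  set L : ℝ := (k/2)*(1 + 3*M^2/(2*δ^6)) with hLdef
  have hL : 0 < L := by positivity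
  set K : ℝ := (2*L^2 + 8)/kv with hKdef
  have hK : 0 < K := by positivity
  refine ⟨(2/m + 2/γ + 1 + 2/kv) * ((2/kv) * Real.exp (K*T)), by positivity, ?_⟩
  intro p g₁ g₂ u₁ u₂ hp hg₁ hg₂ hu₁ hu₂ hux₁ hux₂ hpde₁ hpde₂ h01 h02
    hxxa hxxb hxxc hxxd hbg₁ hbg₂ hi0 hi1 t ht
  
  -- two-variable reformulation
  set U₁ : ℝ×ℝ → ℝ := Function.uncurry u₁ with hU₁d
  set U₂ : ℝ×ℝ → ℝ := Function.uncurry u₂ with hU₂d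
  set W : ℝ×ℝ → ℝ := fun q => U₁ q - U₂ q with hWd
  have hWc : ContDiff ℝ (⊤ : ℕ∞) W := hu₁.sub hu₂
  -- pointwise slice-derivative conversions
  have XSL : ∀ (V : ℝ×ℝ → ℝ), ContDiff ℝ (⊤ : ℕ∞) V → ∀ t,
      deriv (fun x => V (t,x)) = fun x => DX V (t,x) :=
    fun V hV t => funext fun x => deriv_sliceX hV t x
  have s1₁ : ∀ t, deriv (u₁ t) = fun x => DX U₁ (t,x) := fun t => XSL U₁ hu₁ t
  have s1₂ : ∀ t, deriv (u₂ t) = fun x => DX U₂ (t,x) := fun t => XSL U₂ hu₂ t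
  have s1₁' : ∀ t x, deriv (u₁ t) x = DX U₁ (t,x) := fun t x => deriv_sliceX hu₁ t x
  have s1₂' : ∀ t x, deriv (u₂ t) x = DX U₂ (t,x) := fun t x => deriv_sliceX hu₂ t x
  have s2₁ : ∀ t, deriv (deriv (u₁ t)) = fun x => DX (DX U₁) (t,x) := fun t => by
    rw [s1₁ t]; exact XSL (DX U₁) (contDiff_DX hu₁) t
  have s2₂ : ∀ t, deriv (deriv (u₂ t)) = fun x => DX (DX U₂) (t,x) := fun t => by
    rw [s1₂ t]; exact XSL (DX U₂) (contDiff_DX hu₂) t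
  have s2₁' : ∀ t x, deriv (deriv (u₁ t)) x = DX (DX U₁) (t,x) := fun t x => by rw [s2₁ t]
  have s2₂' : ∀ t x, deriv (deriv (u₂ t)) x = DX (DX U₂) (t,x) := fun t x => by rw [s2₂ t]
  have s3₁ : ∀ t, deriv (deriv (deriv (u₁ t))) = fun x => DX (DX (DX U₁)) (t,x) := fun t => by
    rw [s2₁ t]; exact XSL _ (contDiff_DX (contDiff_DX hu₁)) t
  have s3₂ : ∀ t, deriv (deriv (deriv (u₂ t))) = fun x => DX (DX (DX U₂)) (t,x) := fun t => by
    rw [s2₂ t]; exact XSL _ (contDiff_DX (contDiff_DX hu₂)) t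
  have s3₁' : ∀ t x, deriv (deriv (deriv (u₁ t))) x = DX (DX (DX U₁)) (t,x) := fun t x => by rw [s3₁ t]
  have s3₂' : ∀ t x, deriv (deriv (deriv (u₂ t))) x = DX (DX (DX U₂)) (t,x) := fun t x => by rw [s3₂ t]
  have s4₁' : ∀ t x, deriv (deriv (deriv (deriv (u₁ t)))) x = DX (DX (DX (DX U₁))) (t,x) :=
    fun t x => by rw [s3₁ t]; exact deriv_sliceX (contDiff_DX (contDiff_DX (contDiff_DX hu₁))) t x
  have s4₂' : ∀ t x, deriv (deriv (deriv (deriv (u₂ t)))) x = DX (DX (DX (DX U₂))) (t,x) :=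
    fun t x => by rw [s3₂ t]; exact deriv_sliceX (contDiff_DX (contDiff_DX (contDiff_DX hu₂))) t x
  have smix₁ : ∀ t x, deriv (fun τ => deriv (u₁ τ) x) t = DT (DX U₁) (t,x) := fun t x => by
    have e : (fun τ => deriv (u₁ τ) x) = fun τ => DX U₁ (τ,x) := funext fun τ => s1₁' τ x
    rw [e]; exact deriv_sliceT (contDiff_DX hu₁) t x
  have smix₂ : ∀ t x, deriv (fun τ => deriv (u₂ τ) x) t = DT (DX U₂) (t,x) := fun t x => by
    have e : (fun τ => deriv (u₂ τ) x) = fun τ => DX U₂ (τ,x) := funext fun τ => s1₂' τ x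
    rw [e]; exact deriv_sliceT (contDiff_DX hu₂) t x
  have stt₁ : ∀ t x, deriv (fun τ => deriv (fun σ => u₁ σ x) τ) t = DT (DT U₁) (t,x) := fun t x => by
    have e : (fun τ => deriv (fun σ => u₁ σ x) τ) = fun τ => DT U₁ (τ,x) :=
      funext fun τ => deriv_sliceT hu₁ τ x
    rw [e]; exact deriv_sliceT (contDiff_DT hu₁) t x
  have stt₂ : ∀ t x, deriv (fun τ => deriv (fun σ => u₂ σ x) τ) t = DT (DT U₂) (t,x) := fun t x => by
    have e : (fun τ => deriv (fun σ => u₂ σ x) τ) = fun τ => DT U₂ (τ,x) :=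
      funext fun τ => deriv_sliceT hu₂ τ x
    rw [e]; exact deriv_sliceT (contDiff_DT hu₂) t x
  -- statement-side conversions for the difference W
  have sW1 : ∀ t x, deriv (fun τ => u₁ τ x - u₂ τ x) t = DT W (t,x) :=
    fun t x => deriv_sliceT hWc t x
  have sW2 : ∀ t, deriv (fun ξ => u₁ t ξ - u₂ t ξ) = fun x => DX W (t,x) :=
    fun t => funext fun x => deriv_sliceX hWc t x
  have sW2' : ∀ t x, deriv (fun ξ => u₁ t ξ - u₂ t ξ) x = DX W (t,x) := fun t x => by rw [sW2 t]
  have sW3 : ∀ t x, deriv (deriv (fun ξ => u₁ t ξ - u₂ t ξ)) x = DX (DX W) (t,x) := fun t x => by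
    rw [sW2 t]; exact deriv_sliceX (contDiff_DX hWc) t x
  have sW4 : ∀ τ x, deriv (fun σ => deriv (fun ξ => u₁ σ ξ - u₂ σ ξ) x) τ = DX (DT W) (τ,x) := by
    intro τ x
    have e1 : (fun σ => deriv (fun ξ => u₁ σ ξ - u₂ σ ξ) x) = fun σ => DX W (σ, x) :=
      funext fun σ => sW2' σ x
    rw [e1, deriv_sliceT (contDiff_DX hWc) τ x, DT_DX_comm hWc]
  -- subtraction chains
  have eDX1 : ∀ q, DX W q = DX U₁ q - DX U₂ q := fun q => congrFun (DX_sub hu₁ hu₂) q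
  have eDX1f : DX W = fun q => DX U₁ q - DX U₂ q := DX_sub hu₁ hu₂
  have eDX2f : DX (DX W) = fun q => DX (DX U₁) q - DX (DX U₂) q := by
    rw [eDX1f]; exact DX_sub (contDiff_DX hu₁) (contDiff_DX hu₂)
  have eDX2 : ∀ q, DX (DX W) q = DX (DX U₁) q - DX (DX U₂) q := fun q => congrFun eDX2f q
  have eDX3f : DX (DX (DX W)) = fun q => DX (DX (DX U₁)) q - DX (DX (DX U₂)) q := by
    rw [eDX2f]; exact DX_sub (contDiff_DX (contDiff_DX hu₁)) (contDiff_DX (contDiff_DX hu₂))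
  have eDX3 : ∀ q, DX (DX (DX W)) q = DX (DX (DX U₁)) q - DX (DX (DX U₂)) q :=
    fun q => congrFun eDX3f q
  have eDX4 : ∀ q, DX (DX (DX (DX W))) q
      = DX (DX (DX (DX U₁))) q - DX (DX (DX (DX U₂))) q := fun q => by
    rw [eDX3f]
    exact congrFun (DX_sub (contDiff_DX (contDiff_DX (contDiff_DX hu₁)))
      (contDiff_DX (contDiff_DX (contDiff_DX hu₂)))) q
  have eDT1 : ∀ q, DT W q = DT U₁ q - DT U₂ q := fun q => congrFun (DT_sub hu₁ hu₂) q
  have eDT1f : DT W = fun q => DT U₁ q - DT U₂ q := DT_sub hu₁ hu₂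
  have eDTT : ∀ q, DT (DT W) q = DT (DT U₁) q - DT (DT U₂) q := fun q => by
    rw [eDT1f]; exact congrFun (DT_sub (contDiff_DT hu₁) (contDiff_DT hu₂)) q
  have eDTDX : ∀ q, DT (DX W) q = DT (DX U₁) q - DT (DX U₂) q := fun q => by
    rw [eDX1f]; exact congrFun (DT_sub (contDiff_DX hu₁) (contDiff_DX hu₂)) q
  have ecomm : DX (DT W) = DT (DX W) := (DT_DX_comm hWc).symm
  have ecommXX : DT (DX (DX W)) = fun q => DX (DX (DT W)) q := by
    rw [DT_DX_comm (contDiff_DX hWc), DT_DX_comm hWc]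
  -- converted hypotheses
  have Hux₁ : ∀ t ∈ Icc (0:ℝ) T, ∀ x ∈ Icc (0:ℝ) 1, DX U₁ (t,x) ∈ Icc δ M := by
    intro t ht x hx; have h0 := hux₁ t ht x hx; rwa [s1₁' t x] at h0
  have Hux₂ : ∀ t ∈ Icc (0:ℝ) T, ∀ x ∈ Icc (0:ℝ) 1, DX U₂ (t,x) ∈ Icc δ M := by
    intro t ht x hx; have h0 := hux₂ t ht x hx; rwa [s1₂' t x] at h0
  have HPDE₁ : ∀ t ∈ Ioo (0:ℝ) T, ∀ x ∈ Ioo (0:ℝ) 1,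
      deriv (fun ξ => (k/2) * (DX U₁ (t,ξ) - 1/2 - 1/(2 * (DX U₁ (t,ξ))^3))
        + kv * DT (DX U₁) (t,ξ)) x
      = m * DT (DT U₁) (t,x) + γ * DX (DX (DX (DX U₁))) (t,x) + deriv (p t) x := by
    intro t ht x hx
    have h0 := hpde₁ t ht x hx
    have ecombo : (fun ξ => (k/2) * (deriv (u₁ t) ξ - 1/2 - 1/(2 * (deriv (u₁ t) ξ)^3)) +
          kv * deriv (fun τ => deriv (u₁ τ) ξ) t)
        = (fun ξ => (k/2) * (DX U₁ (t,ξ) - 1/2 - 1/(2 * (DX U₁ (t,ξ))^3))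
            + kv * DT (DX U₁) (t,ξ)) :=
      funext fun ξ => by rw [s1₁' t ξ, smix₁ t ξ]
    rw [ecombo, stt₁ t x, s4₁' t x] at h0
    linarith
  have HPDE₂ : ∀ t ∈ Ioo (0:ℝ) T, ∀ x ∈ Ioo (0:ℝ) 1,
      deriv (fun ξ => (k/2) * (DX U₂ (t,ξ) - 1/2 - 1/(2 * (DX U₂ (t,ξ))^3))
        + kv * DT (DX U₂) (t,ξ)) x
      = m * DT (DT U₂) (t,x) + γ * DX (DX (DX (DX U₂))) (t,x) + deriv (p t) x := by
    intro t ht x hx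
    have h0 := hpde₂ t ht x hx
    have ecombo : (fun ξ => (k/2) * (deriv (u₂ t) ξ - 1/2 - 1/(2 * (deriv (u₂ t) ξ)^3)) +
          kv * deriv (fun τ => deriv (u₂ τ) ξ) t)
        = (fun ξ => (k/2) * (DX U₂ (t,ξ) - 1/2 - 1/(2 * (DX U₂ (t,ξ))^3))
            + kv * DT (DX U₂) (t,ξ)) :=
      funext fun ξ => by rw [s1₂' t ξ, smix₂ t ξ]
    rw [ecombo, stt₂ t x, s4₂' t x] at h0
    linarith
  have HBC₁ : ∀ t ∈ Icc (0:ℝ) T, -γ * DX (DX (DX U₁)) (t,1)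
      + (k/2)*(DX U₁ (t,1) - 1/2 - 1/(2*(DX U₁ (t,1))^3))
      + kv * DT (DX U₁) (t,1) + p t 1 = g₁ t := by
    intro t ht; have h0 := hbg₁ t ht; rwa [s3₁' t 1, s1₁' t 1, smix₁ t 1] at h0
  have HBC₂ : ∀ t ∈ Icc (0:ℝ) T, -γ * DX (DX (DX U₂)) (t,1)
      + (k/2)*(DX U₂ (t,1) - 1/2 - 1/(2*(DX U₂ (t,1))^3))
      + kv * DT (DX U₂) (t,1) + p t 1 = g₂ t := by
    intro t ht; have h0 := hbg₂ t ht; rwa [s3₂' t 1, s1₂' t 1, smix₂ t 1] at h0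
  have HXX0 : ∀ t ∈ Icc (0:ℝ) T, DX (DX W) (t,0) = 0 := by
    intro t ht
    have e0 := hxxa t ht; have f0 := hxxc t ht
    rw [s2₁' t 0] at e0; rw [s2₂' t 0] at f0
    rw [eDX2 (t,0), e0, f0, sub_zero]
  have HXX1 : ∀ t ∈ Icc (0:ℝ) T, DX (DX W) (t,1) = 0 := by
    intro t ht
    have e0 := hxxb t ht; have f0 := hxxd t ht
    rw [s2₁' t 1] at e0; rw [s2₂' t 1] at f0
    rw [eDX2 (t,1), e0, f0, sub_zero]
  -- time derivative of W at the clamped end vanishes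
  have Hw0 : ∀ t ∈ Ioo (0:ℝ) T, DT W (t,0) = 0 := by
    intro t ht
    have e : DT W (t,0) = deriv (fun τ => W (τ,0)) t := (deriv_sliceT hWc t 0).symm
    rw [e]
    apply deriv_eventually_zero
    filter_upwards [Ioo_mem_nhds ht.1 ht.2] with τ hτ
    show u₁ τ 0 - u₂ τ 0 = 0
    rw [h01 τ (Ioo_subset_Icc_self hτ), h02 τ (Ioo_subset_Icc_self hτ)]; ring
  -- vanishing initial data
  have HA0 : ∀ x ∈ Ioo (0:ℝ) 1, DT W (0,x) = 0 := by
    intro x hx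
    have e1 : deriv (fun τ => u₁ τ x) 0 = DT U₁ (0,x) := deriv_sliceT hu₁ 0 x
    have e2 : deriv (fun τ => u₂ τ x) 0 = DT U₂ (0,x) := deriv_sliceT hu₂ 0 x
    have h0 := hi1 x (Ioo_subset_Icc_self hx); rw [e1, e2] at h0
    rw [eDT1 (0,x), h0, sub_self]
  have HX0 : ∀ x ∈ Ioo (0:ℝ) 1, DX W (0,x) = 0 := by
    intro x hx
    have e : DX W (0,x) = deriv (fun ξ => W (0,ξ)) x := (deriv_sliceX hWc 0 x).symm
    rw [e]; apply deriv_eventually_zero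
    filter_upwards [Ioo_mem_nhds hx.1 hx.2] with ξ hξ
    show u₁ 0 ξ - u₂ 0 ξ = 0
    rw [hi0 ξ (Ioo_subset_Icc_self hξ)]; ring
  have HXX00 : ∀ x ∈ Ioo (0:ℝ) 1, DX (DX W) (0,x) = 0 := by
    intro x hx
    have e : DX (DX W) (0,x) = deriv (fun ξ => DX W (0,ξ)) x :=
      (deriv_sliceX (contDiff_DX hWc) 0 x).symm
    rw [e]; apply deriv_eventually_zero
    filter_upwards [Ioo_mem_nhds hx.1 hx.2] with ξ hξ
    exact HX0 ξ hξ
  -- energy functionals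
  set A : ℝ → ℝ := fun τ => ∫ x in (0:ℝ)..1, (DT W (τ,x))^2 with hAdef
  set B : ℝ → ℝ := fun τ => ∫ x in (0:ℝ)..1, (DX (DX W) (τ,x))^2 with hBdef
  set Cf : ℝ → ℝ := fun τ => ∫ x in (0:ℝ)..1, (DX W (τ,x))^2 with hCdef
  set hh : ℝ → ℝ := fun τ => ∫ x in (0:ℝ)..1, (DX (DT W) (τ,x))^2 with hhdef
  set Df : ℝ → ℝ := fun τ => ∫ s in (0:ℝ)..τ, hh s with hDdef
  set Φ : ℝ → ℝ := fun τ => (m/2) * A τ + (γ/2) * B τ + Cf τ + (kv/2) * Df τ with hΦdef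
  have hA' : ∀ τ, HasDerivAt A (∫ x in (0:ℝ)..1, 2 * DT W (τ,x) * DT (DT W) (τ,x)) τ :=
    fun τ => leibniz_sq (contDiff_DT hWc) τ
  have hB' : ∀ τ, HasDerivAt B
      (∫ x in (0:ℝ)..1, 2 * DX (DX W) (τ,x) * DT (DX (DX W)) (τ,x)) τ :=
    fun τ => leibniz_sq (contDiff_DX (contDiff_DX hWc)) τ
  have hC' : ∀ τ, HasDerivAt Cf (∫ x in (0:ℝ)..1, 2 * DX W (τ,x) * DT (DX W) (τ,x)) τ :=
    fun τ => leibniz_sq (contDiff_DX hWc) τ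
  have hh' : ∀ τ, HasDerivAt hh
      (∫ x in (0:ℝ)..1, 2 * DX (DT W) (τ,x) * DT (DX (DT W)) (τ,x)) τ :=
    fun τ => leibniz_sq (contDiff_DX (contDiff_DT hWc)) τ
  have hhc : Continuous hh := continuous_iff_continuousAt.mpr fun τ =>
    (hh' τ).continuousAt
  have hD' : ∀ τ, HasDerivAt Df (hh τ) τ := fun τ =>
    intervalIntegral.integral_hasDerivAt_right (hhc.intervalIntegrable _ _)
      (hhc.stronglyMeasurable.stronglyMeasurableAtFilter) hhc.continuousAt
  set Φd : ℝ → ℝ := fun τ =>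
      (m/2) * (∫ x in (0:ℝ)..1, 2 * DT W (τ,x) * DT (DT W) (τ,x))
    + (γ/2) * (∫ x in (0:ℝ)..1, 2 * DX (DX W) (τ,x) * DT (DX (DX W)) (τ,x))
    + (∫ x in (0:ℝ)..1, 2 * DX W (τ,x) * DT (DX W) (τ,x))
    + (kv/2) * hh τ with hΦddef
  have hΦ' : ∀ τ, HasDerivAt Φ (Φd τ) τ := fun τ =>
    ((((hA' τ).const_mul (m/2)).add ((hB' τ).const_mul (γ/2))).add (hC' τ)).add
      ((hD' τ).const_mul (kv/2))
  -- nonnegativity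
  have hA0 : ∀ τ, 0 ≤ A τ :=
    fun τ => intervalIntegral.integral_nonneg (by norm_num) (fun x _ => sq_nonneg _)
  have hB0 : ∀ τ, 0 ≤ B τ :=
    fun τ => intervalIntegral.integral_nonneg (by norm_num) (fun x _ => sq_nonneg _)
  have hC0 : ∀ τ, 0 ≤ Cf τ :=
    fun τ => intervalIntegral.integral_nonneg (by norm_num) (fun x _ => sq_nonneg _)
  have hh0 : ∀ τ, 0 ≤ hh τ :=
    fun τ => intervalIntegral.integral_nonneg (by norm_num) (fun x _ => sq_nonneg _)
  have hD0 : ∀ τ, 0 ≤ τ → 0 ≤ Df τ :=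
    fun τ hτ => intervalIntegral.integral_nonneg hτ (fun s _ => hh0 s)
  clear_value A B Cf hh Df Φd Φ
  have hΦd_le : ∀ τ ∈ Ioo (0:ℝ) T, Φd τ ≤ K * Φ τ + (2/kv) * (g₁ τ - g₂ τ)^2 := by
    intro τ hτ
    have htI : τ ∈ Icc (0:ℝ) T := Ioo_subset_Icc_self hτ
    have hχeqτ : ∀ x : ℝ, DX (DT W) (τ,x) = DT (DX U₁) (τ,x) - DT (DX U₂) (τ,x) := fun x => by
      rw [congrFun ecomm (τ,x), eDTDX (τ,x)]
    have hbcτ : ((k/2)*(DX U₁ (τ,1) - 1/2 - 1/(2*(DX U₁ (τ,1))^3)) + kv * DT (DX U₁) (τ,1))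
        - ((k/2)*(DX U₂ (τ,1) - 1/2 - 1/(2*(DX U₂ (τ,1))^3)) + kv * DT (DX U₂) (τ,1))
        = (g₁ τ - g₂ τ) + γ * DX (DX (DX W)) (τ,1) := by
      rw [eDX3 (τ,1)]
      linarith [HBC₁ τ htI, HBC₂ τ htI]
    have EST := energy_est m γ k kv δ M hk hkv hδ
      (fun ξ => DX U₁ (τ,ξ)) (fun ξ => DX U₂ (τ,ξ))
      (fun ξ => DT (DX U₁) (τ,ξ)) (fun ξ => DT (DX U₂) (τ,ξ))
      (fun ξ => DT W (τ,ξ)) (fun ξ => DX (DT W) (τ,ξ)) (fun ξ => DX (DX (DT W)) (τ,ξ))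
      (fun ξ => DX W (τ,ξ)) (fun ξ => DX (DX W) (τ,ξ)) (fun ξ => DX (DX (DX W)) (τ,ξ))
      (fun ξ => DX (DX (DX (DX W))) (τ,ξ))
      (fun ξ => DT (DT W) (τ,ξ)) (fun ξ => DT (DT U₁) (τ,ξ)) (fun ξ => DT (DT U₂) (τ,ξ))
      (fun ξ => DX (DX (DX (DX U₁))) (τ,ξ)) (fun ξ => DX (DX (DX (DX U₂))) (τ,ξ))
      (fun x => deriv (p τ) x) (g₁ τ - g₂ τ)
      (fun x => (hasDerivAt_sliceX (contDiff_DX hu₁) τ x).differentiableAt)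
      (fun x => (hasDerivAt_sliceX (contDiff_DX hu₂) τ x).differentiableAt)
      (fun x => (hasDerivAt_sliceX (contDiff_DT (contDiff_DX hu₁)) τ x).differentiableAt)
      (fun x => (hasDerivAt_sliceX (contDiff_DT (contDiff_DX hu₂)) τ x).differentiableAt)
      (fun x => hasDerivAt_sliceX (contDiff_DT hWc) τ x)
      (fun x => hasDerivAt_sliceX (contDiff_DX (contDiff_DT hWc)) τ x)
      (fun x => hasDerivAt_sliceX (contDiff_DX (contDiff_DX hWc)) τ x)
      (fun x => hasDerivAt_sliceX (contDiff_DX (contDiff_DX (contDiff_DX hWc))) τ x)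
      ((contDiff_DX (contDiff_DX (contDiff_DT hWc))).continuous.comp (Continuous.prodMk_right τ))
      ((contDiff_DX (contDiff_DX (contDiff_DX (contDiff_DX hWc)))).continuous.comp
        (Continuous.prodMk_right τ))
      ((contDiff_DT (contDiff_DT hWc)).continuous.comp (Continuous.prodMk_right τ))
      ((contDiff_DX hWc).continuous.comp (Continuous.prodMk_right τ))
      hχeqτ
      (fun x => eDX1 (τ,x))
      (fun x => eDTT (τ,x))
      (fun x => eDX4 (τ,x))
      (fun x hx => Hux₁ τ htI x hx) (fun x hx => Hux₂ τ htI x hx)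
      (fun x hx => HPDE₁ τ hτ x hx) (fun x hx => HPDE₂ τ hτ x hx)
      (Hw0 τ hτ) (HXX0 τ htI) (HXX1 τ htI)
      hbcτ
    have EST' : m * (∫ x in (0:ℝ)..1, DT (DT W) (τ,x) * DT W (τ,x))
        + γ * (∫ x in (0:ℝ)..1, DX (DX W) (τ,x) * DX (DX (DT W)) (τ,x))
        + 2 * (∫ x in (0:ℝ)..1, DX W (τ,x) * DX (DT W) (τ,x))
        + (kv/2) * (∫ x in (0:ℝ)..1, (DX (DT W) (τ,x))^2)
        ≤ ((2*L^2 + 8)/kv) * (∫ x in (0:ℝ)..1, (DX W (τ,x))^2)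
          + (2/kv) * (g₁ τ - g₂ τ)^2 := EST
    have e1 : (∫ x in (0:ℝ)..1, 2 * DT W (τ,x) * DT (DT W) (τ,x))
        = 2 * ∫ x in (0:ℝ)..1, DT (DT W) (τ,x) * DT W (τ,x) := by
      rw [← intervalIntegral.integral_const_mul]
      apply intervalIntegral.integral_congr
      intro x _; simp only []; ring
    have e2 : (∫ x in (0:ℝ)..1, 2 * DX (DX W) (τ,x) * DT (DX (DX W)) (τ,x))
        = 2 * ∫ x in (0:ℝ)..1, DX (DX W) (τ,x) * DX (DX (DT W)) (τ,x) := by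
      rw [← intervalIntegral.integral_const_mul]
      apply intervalIntegral.integral_congr
      intro x _; simp only []
      rw [congrFun ecommXX (τ,x)]; ring
    have e3 : (∫ x in (0:ℝ)..1, 2 * DX W (τ,x) * DT (DX W) (τ,x))
        = 2 * ∫ x in (0:ℝ)..1, DX W (τ,x) * DX (DT W) (τ,x) := by
      rw [← intervalIntegral.integral_const_mul]
      apply intervalIntegral.integral_congr
      intro x _; simp only []
      rw [congrFun ecomm (τ,x)]; ring
    have hΦdval : Φd τ = m * (∫ x in (0:ℝ)..1, DT (DT W) (τ,x) * DT W (τ,x))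
        + γ * (∫ x in (0:ℝ)..1, DX (DX W) (τ,x) * DX (DX (DT W)) (τ,x))
        + 2 * (∫ x in (0:ℝ)..1, DX W (τ,x) * DX (DT W) (τ,x))
        + (kv/2) * hh τ := by
      rw [hΦddef]; simp only []
      rw [e1, e2, e3]; ring
    have hhval : hh τ = ∫ x in (0:ℝ)..1, (DX (DT W) (τ,x))^2 := by rw [hhdef]
    have hCfval : Cf τ = ∫ x in (0:ℝ)..1, (DX W (τ,x))^2 := by rw [hCdef]
    have hφτ : Φ τ = (m/2) * A τ + (γ/2) * B τ + Cf τ + (kv/2) * Df τ := by rw [hΦdef]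
    have hKval : ((2*L^2 + 8)/kv) = K := by rw [hKdef]
    have hCfΦ : Cf τ ≤ Φ τ := by
      nlinarith [mul_nonneg hm.le (hA0 τ), mul_nonneg hγ.le (hB0 τ),
        mul_nonneg hkv.le (hD0 τ hτ.1.le), hφτ]
    have hKCf : K * Cf τ ≤ K * Φ τ := mul_le_mul_of_nonneg_left hCfΦ hK.le
    rw [hΦdval, hhval]
    rw [hKval, ← hCfval] at EST'
    linarith [EST', hKCf]
  have hA00 : A 0 = 0 := by
    rw [hAdef]; simp only []
    rw [integral_congr_Ioo (g := fun _ => (0:ℝ)) (fun x hx => by rw [HA0 x hx]; norm_num)]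
    simp
  have hB00 : B 0 = 0 := by
    rw [hBdef]; simp only []
    rw [integral_congr_Ioo (g := fun _ => (0:ℝ)) (fun x hx => by rw [HXX00 x hx]; norm_num)]
    simp
  have hC00 : Cf 0 = 0 := by
    rw [hCdef]; simp only []
    rw [integral_congr_Ioo (g := fun _ => (0:ℝ)) (fun x hx => by rw [HX0 x hx]; norm_num)]
    simp
  have hD00 : Df 0 = 0 := by
    rw [hDdef]; simp only []; exact intervalIntegral.integral_same
  have hΦ0 : Φ 0 = 0 := by
    rw [hΦdef]; simp only []; rw [hA00, hB00, hC00, hD00]; ring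
  have hGron : ∀ τ ∈ Icc (0:ℝ) T, Φ τ ≤ (2/kv) * Real.exp (K*T) *
      ∫ s in (0:ℝ)..τ, (g₁ s - g₂ s)^2 := by
    set G2 : ℝ → ℝ := fun s => Real.exp (-K*s) * (g₁ s - g₂ s)^2 with hG2def
    have hG2c : Continuous G2 :=
      (Real.continuous_exp.comp (continuous_const.mul continuous_id)).mul ((hg₁.sub hg₂).pow 2)
    set Θ : ℝ → ℝ := fun σ => Φ σ * Real.exp (-K*σ) - (2/kv) * ∫ s in (0:ℝ)..σ, G2 s with hΘdef
    have hΘ' : ∀ τ, HasDerivAt Θ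
        ((Φd τ - K * Φ τ) * Real.exp (-K*τ) - (2/kv) * G2 τ) τ := by
      intro τ
      have h1 : HasDerivAt (fun σ : ℝ => Real.exp (-K*σ)) (-K * Real.exp (-K*τ)) τ := by
        have h0 : HasDerivAt (fun σ : ℝ => -K*σ) (-K) τ := by
          simpa using (hasDerivAt_id τ).const_mul (-K)
        have := h0.exp
        simpa [mul_comm] using this
      have h2 := (hΦ' τ).fun_mul h1
      have h3 : HasDerivAt (fun σ => ∫ s in (0:ℝ)..σ, G2 s) (G2 τ) τ :=
        intervalIntegral.integral_hasDerivAt_right (hG2c.intervalIntegrable _ _)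
          (hG2c.stronglyMeasurable.stronglyMeasurableAtFilter) hG2c.continuousAt
      have h4 := h2.fun_sub (h3.const_mul (2/kv))
      exact h4.congr_deriv (by ring)
    have hmono : AntitoneOn Θ (Icc 0 T) := by
      apply antitoneOn_of_deriv_nonpos (convex_Icc 0 T)
      · exact fun τ _ => (hΘ' τ).continuousAt.continuousWithinAt
      · intro τ _; exact (hΘ' τ).differentiableAt.differentiableWithinAt
      · intro τ hτ'
        rw [interior_Icc] at hτ'
        rw [(hΘ' τ).deriv]
        have hb := hΦd_le τ hτ'
        have he : (0:ℝ) < Real.exp (-K*τ) := Real.exp_pos _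
        have hG2τ : G2 τ = Real.exp (-K*τ) * (g₁ τ - g₂ τ)^2 := by rw [hG2def]
        rw [hG2τ]
        nlinarith [hb, he]
    intro τ hτ
    have h5 : Θ τ ≤ Θ 0 := hmono (left_mem_Icc.mpr hT.le) hτ hτ.1
    have hΘ0 : Θ 0 = 0 := by
      rw [hΘdef]; simp only []
      rw [hΦ0, intervalIntegral.integral_same]; ring
    rw [hΘ0] at h5
    have hΘτ : Θ τ = Φ τ * Real.exp (-K*τ) - (2/kv) * ∫ s in (0:ℝ)..τ, G2 s := by rw [hΘdef]
    rw [hΘτ] at h5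
    -- compare the weighted and unweighted integrals
    have hcmp : (∫ s in (0:ℝ)..τ, G2 s) ≤ ∫ s in (0:ℝ)..τ, (g₁ s - g₂ s)^2 := by
      apply intervalIntegral.integral_mono_on hτ.1 (hG2c.intervalIntegrable _ _)
        (((hg₁.sub hg₂).pow 2).intervalIntegrable _ _)
      intro s hs
      have hG2s : G2 s = Real.exp (-K*s) * (g₁ s - g₂ s)^2 := by rw [hG2def]
      rw [hG2s]
      have hexp1 : Real.exp (-K*s) ≤ 1 := by
        rw [Real.exp_le_one_iff]
        nlinarith [hs.1, hK]
      show Real.exp (-K*s) * (g₁ s - g₂ s)^2 ≤ (g₁ s - g₂ s)^2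
      nlinarith [sq_nonneg (g₁ s - g₂ s), Real.exp_pos (-K*s), hexp1]
    have hePos : (0:ℝ) < Real.exp (-K*τ) := Real.exp_pos _
    have hstep : Φ τ * Real.exp (-K*τ) ≤ (2/kv) * ∫ s in (0:ℝ)..τ, (g₁ s - g₂ s)^2 := by
      have : (2/kv) * (∫ s in (0:ℝ)..τ, G2 s) ≤ (2/kv) * ∫ s in (0:ℝ)..τ, (g₁ s - g₂ s)^2 :=
        mul_le_mul_of_nonneg_left hcmp (by positivity)
      linarith
    have hmul := mul_le_mul_of_nonneg_right hstep (Real.exp_pos (K*τ)).le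
    have hee : Real.exp (-K*τ) * Real.exp (K*τ) = 1 := by
      rw [← Real.exp_add]; norm_num
    have hΦτle : Φ τ ≤ (2/kv) * (∫ s in (0:ℝ)..τ, (g₁ s - g₂ s)^2) * Real.exp (K*τ) := by
      calc Φ τ = Φ τ * (Real.exp (-K*τ) * Real.exp (K*τ)) := by rw [hee]; ring
        _ = Φ τ * Real.exp (-K*τ) * Real.exp (K*τ) := by ring
        _ ≤ (2/kv) * (∫ s in (0:ℝ)..τ, (g₁ s - g₂ s)^2) * Real.exp (K*τ) := hmul
    have hint0 : 0 ≤ ∫ s in (0:ℝ)..τ, (g₁ s - g₂ s)^2 :=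
      intervalIntegral.integral_nonneg hτ.1 (fun s _ => sq_nonneg _)
    have hexpT : Real.exp (K*τ) ≤ Real.exp (K*T) :=
      Real.exp_le_exp.mpr (mul_le_mul_of_nonneg_left hτ.2 hK.le)
    calc Φ τ ≤ (2/kv) * (∫ s in (0:ℝ)..τ, (g₁ s - g₂ s)^2) * Real.exp (K*τ) := hΦτle
      _ ≤ (2/kv) * (∫ s in (0:ℝ)..τ, (g₁ s - g₂ s)^2) * Real.exp (K*T) := by
          apply mul_le_mul_of_nonneg_left hexpT (by positivity)
      _ = (2/kv) * Real.exp (K*T) * ∫ s in (0:ℝ)..τ, (g₁ s - g₂ s)^2 := by ring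
  -- final assembly
  have F1 : (∫ x in (0:ℝ)..1, (deriv (fun τ => u₁ τ x - u₂ τ x) t)^2) = A t := by
    rw [hAdef]; simp only []
    apply intervalIntegral.integral_congr
    intro x _; simp only []; rw [sW1 t x]
  have F2 : (∫ x in (0:ℝ)..1, (deriv (deriv (fun ξ => u₁ t ξ - u₂ t ξ)) x)^2) = B t := by
    rw [hBdef]; simp only []
    apply intervalIntegral.integral_congr
    intro x _; simp only []; rw [sW3 t x]
  have F3 : (∫ x in (0:ℝ)..1, (deriv (fun ξ => u₁ t ξ - u₂ t ξ) x)^2) = Cf t := by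
    rw [hCdef]; simp only []
    apply intervalIntegral.integral_congr
    intro x _; simp only []; rw [sW2' t x]
  have F4 : (∫ τ in (0:ℝ)..t, ∫ x in (0:ℝ)..1,
      (deriv (fun σ => deriv (fun ξ => u₁ σ ξ - u₂ σ ξ) x) τ)^2) = Df t := by
    rw [hDdef]; simp only []
    apply intervalIntegral.integral_congr
    intro τ _
    rw [hhdef]; simp only []
    apply intervalIntegral.integral_congr
    intro x _; simp only []; rw [sW4 τ x]
  have F5 : (∫ τ in (0:ℝ)..t, |g₁ τ - g₂ τ|^2) = ∫ τ in (0:ℝ)..t, (g₁ τ - g₂ τ)^2 := by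
    apply intervalIntegral.integral_congr
    intro τ _; simp only []; rw [sq_abs]
  rw [F1, F2, F3, F4, F5]
  have hφt : Φ t = (m/2) * A t + (γ/2) * B t + Cf t + (kv/2) * Df t := by rw [hΦdef]
  have hGt := hGron t ht
  have hint0 : 0 ≤ ∫ s in (0:ℝ)..t, (g₁ s - g₂ s)^2 :=
    intervalIntegral.integral_nonneg ht.1 (fun s _ => sq_nonneg _)
  have hAle : A t ≤ (2/m) * Φ t := by
    have h1 : (m/2) * A t ≤ Φ t := by
      nlinarith [mul_nonneg hγ.le (hB0 t), hC0 t, mul_nonneg hkv.le (hD0 t ht.1), hφt]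
    have e0 : (2/m) * (m/2) = 1 := by field_simp
    calc A t = (2/m) * ((m/2) * A t) := by rw [← mul_assoc, e0, one_mul]
      _ ≤ (2/m) * Φ t := mul_le_mul_of_nonneg_left h1 (by positivity)
  have hBle : B t ≤ (2/γ) * Φ t := by
    have h1 : (γ/2) * B t ≤ Φ t := by
      nlinarith [mul_nonneg hm.le (hA0 t), hC0 t, mul_nonneg hkv.le (hD0 t ht.1), hφt]
    have e0 : (2/γ) * (γ/2) = 1 := by field_simp
    calc B t = (2/γ) * ((γ/2) * B t) := by rw [← mul_assoc, e0, one_mul]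
      _ ≤ (2/γ) * Φ t := mul_le_mul_of_nonneg_left h1 (by positivity)
  have hCle : Cf t ≤ Φ t := by
    nlinarith [mul_nonneg hm.le (hA0 t), mul_nonneg hγ.le (hB0 t),
      mul_nonneg hkv.le (hD0 t ht.1), hφt]
  have hDle : Df t ≤ (2/kv) * Φ t := by
    have h1 : (kv/2) * Df t ≤ Φ t := by
      nlinarith [mul_nonneg hm.le (hA0 t), mul_nonneg hγ.le (hB0 t), hC0 t, hφt]
    have e0 : (2/kv) * (kv/2) = 1 := by field_simp
    calc Df t = (2/kv) * ((kv/2) * Df t) := by rw [← mul_assoc, e0, one_mul]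
      _ ≤ (2/kv) * Φ t := mul_le_mul_of_nonneg_left h1 (by positivity)
  have hΦnn : 0 ≤ Φ t := by
    nlinarith [mul_nonneg hm.le (hA0 t), mul_nonneg hγ.le (hB0 t), hC0 t,
      mul_nonneg hkv.le (hD0 t ht.1), hφt]
  have hsum : A t + B t + Cf t + Df t ≤ (2/m + 2/γ + 1 + 2/kv) * Φ t := by
    nlinarith [hAle, hBle, hCle, hDle]
  calc A t + B t + Cf t + Df t ≤ (2/m + 2/γ + 1 + 2/kv) * Φ t := hsum
    _ ≤ (2/m + 2/γ + 1 + 2/kv) * ((2/kv) * Real.exp (K*T) *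
          ∫ s in (0:ℝ)..t, (g₁ s - g₂ s)^2) := by
        apply mul_le_mul_of_nonneg_left hGt (by positivity)
    _ = (2/m + 2/γ + 1 + 2/kv) * ((2/kv) * Real.exp (K*T)) *
          ∫ s in (0:ℝ)..t, (g₁ s - g₂ s)^2 := by ring
end

section
/- Let q ≥ 2 and r₁, r₂ > 0, and let z : [0,1] → ℝ be twice continuously differentiable with z(0) = 0 and z'(x) ≠ 0 for all x ∈ [0,1]. If ∫₀¹ 1/|z'(x)|^q dx ≤ r₁ and (∫₀¹ (z(x)² + z'(x)² + z''(x)²) dx)^{1/2} ≤ r₂, then there exists a constant c > 0 depending only on q, r₁ and r₂ (and not on z) such that |z'(x)| ≥ c for every x ∈ [0,1]. -/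
/-!
By Cauchy–Schwarz on `∫ z''`, the `W^{2,2}` bound makes `z'` Hölder-1/2 with constant `r₂`.
If `m = |z'(x₀)|` is small, then at distances between `a = m² / r₂²` and a fixed `T` from `x₀`
we get `|z'(x)| ≤ 2 r₂ √|x - x₀| ≤ 1`, hence `1 / |z'|^q ≥ 1 / (4 r₂² |x - x₀|)` since `q ≥ 2`.
Integrating over the side of `x₀` that fits in `[0, 1]` gives `log (T / a) ≤ 4 r₂² r₁`, which
bounds `m` from below.
-/

open Set MeasureTheory intervalIntegral

lemma integral_abs_le_mul_sqrt_of_integral_sq_le {f : ℝ → ℝ} (hf : Continuous f) {a b K : ℝ}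
    (hab : a ≤ b) (hK : 0 < K) (hI : ∫ x in a..b, f x ^ 2 ≤ K ^ 2) :
    ∫ x in a..b, |f x| ≤ K * √(b - a) := by
  rcases hab.eq_or_lt with rfl | hab
  · simp
  have hs : 0 < √(b - a) := Real.sqrt_pos.2 (sub_pos.2 hab)
  set t := √(b - a) / K with ht_def
  have ht : 0 < t := div_pos hs hK
  -- weighted AM–GM; after integrating, this `t` makes the two terms equal
  have hpt : ∀ x, 2 * |f x| ≤ t * f x ^ 2 + t⁻¹ := fun x => by
    rw [← sq_abs (f x), ← sub_nonneg]
    have : t * |f x| ^ 2 + t⁻¹ - 2 * |f x| = (t * |f x| - 1) ^ 2 / t := by field_simp; ring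
    rw [this]; positivity
  have hcont : Continuous fun x => t * f x ^ 2 + t⁻¹ := by fun_prop
  calc ∫ x in a..b, |f x| = (∫ x in a..b, 2 * |f x|) / 2 := by
        rw [intervalIntegral.integral_const_mul]; ring
    _ ≤ (∫ x in a..b, (t * f x ^ 2 + t⁻¹)) / 2 := by
        gcongr
        exact integral_mono hab.le ((continuous_const.mul hf.abs).intervalIntegrable _ _)
          (hcont.intervalIntegrable _ _) hpt
    _ = (t * ∫ x in a..b, f x ^ 2) / 2 + (b - a) / t / 2 := by
        rw [integral_add ((by fun_prop : Continuous fun x => t * f x ^ 2).intervalIntegrable _ _)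
          intervalIntegrable_const, intervalIntegral.integral_const_mul,
          intervalIntegral.integral_const, smul_eq_mul]
        ring
    _ ≤ t * K ^ 2 / 2 + (b - a) / t / 2 := by gcongr
    _ = K * √(b - a) := by
        rw [ht_def]
        field_simp
        rw [Real.sq_sqrt (sub_pos.2 hab).le]
        ring

lemma abs_sub_le_mul_sqrt_of_integral_deriv_sq_le {f : ℝ → ℝ} (hf : ContDiff ℝ 1 f) {a b K : ℝ}
    (hK : 0 < K) (hI : ∫ x in a..b, deriv f x ^ 2 ≤ K ^ 2) {x y : ℝ} (hx : x ∈ Icc a b)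
    (hy : y ∈ Icc a b) :
    |f x - f y| ≤ K * √|x - y| := by
  wlog hyx : y ≤ x generalizing x y
  · rw [abs_sub_comm, abs_sub_comm x]
    exact this hy hx (le_of_not_ge hyx)
  have hf' : Continuous (deriv f) := hf.continuous_deriv le_rfl
  calc |f x - f y| = |∫ t in y..x, deriv f t| := by
        rw [integral_deriv_eq_sub (fun t _ => hf.differentiable one_ne_zero t)
          (hf'.intervalIntegrable _ _)]
    _ ≤ ∫ t in y..x, |deriv f t| := abs_integral_le_integral_abs hyx
    _ ≤ K * √(x - y) := by
        refine integral_abs_le_mul_sqrt_of_integral_sq_le hf' hyx hK (le_trans ?_ hI)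
        exact integral_mono_interval hy.1 hyx hx.2 (.of_forall fun t => sq_nonneg _)
          ((hf'.pow 2).intervalIntegrable _ _)
    _ = K * √|x - y| := by rw [abs_of_nonneg (sub_nonneg.2 hyx)]

lemma integral_sq_le_of_integral_sum_sq_rpow_le {u v w : ℝ → ℝ} (hu : Continuous u)
    (hv : Continuous v) (hw : Continuous w) {a b r : ℝ} (hab : a ≤ b)
    (h : (∫ x in a..b, (u x ^ 2 + v x ^ 2 + w x ^ 2)) ^ ((1 : ℝ) / 2) ≤ r) :
    ∫ x in a..b, w x ^ 2 ≤ r ^ 2 := by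
  set S := ∫ x in a..b, (u x ^ 2 + v x ^ 2 + w x ^ 2)
  have hS : 0 ≤ S := integral_nonneg hab fun x _ => by positivity
  calc ∫ x in a..b, w x ^ 2 ≤ S :=
        integral_mono hab ((hw.pow 2).intervalIntegrable _ _)
          ((by fun_prop : Continuous fun x => u x ^ 2 + v x ^ 2 + w x ^ 2).intervalIntegrable _ _)
          fun x => by nlinarith [sq_nonneg (u x), sq_nonneg (v x)]
    _ = (S ^ ((1 : ℝ) / 2)) ^ 2 := by rw [← Real.sqrt_eq_rpow, Real.sq_sqrt hS]
    _ ≤ r ^ 2 := pow_le_pow_left₀ (by positivity) h 2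

lemma one_div_le_div_abs_rpow_of_abs_le_two_mul_sqrt {u K d q : ℝ} (hq : 2 ≤ q) (hu : u ≠ 0)
    (hd : 0 < d) (hKd : 4 * K ^ 2 * d ≤ 1) (h : |u| ≤ 2 * K * √d) :
    1 / d ≤ 4 * K ^ 2 / |u| ^ q := by
  have hsq : u ^ 2 ≤ 4 * K ^ 2 * d := by
    calc u ^ 2 = |u| ^ 2 := (sq_abs u).symm
      _ ≤ (2 * K * √d) ^ 2 := pow_le_pow_left₀ (abs_nonneg u) h 2
      _ = 4 * K ^ 2 * d := by rw [mul_pow, Real.sq_sqrt hd.le]; ring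
  have hu1 : |u| ≤ 1 := (sq_le_one_iff_abs_le_one u).1 (hsq.trans hKd)
  have hq' : |u| ^ q ≤ 4 * K ^ 2 * d :=
    calc |u| ^ q ≤ |u| ^ (2 : ℝ) := Real.rpow_le_rpow_of_exponent_ge (abs_pos.2 hu) hu1 hq
      _ = u ^ 2 := by rw [Real.rpow_two, sq_abs]
      _ ≤ 4 * K ^ 2 * d := hsq
  rw [div_le_div_iff₀ hd (by positivity)]
  linarith

lemma log_div_le_integral_of_one_div_sub_le {g : ℝ → ℝ} {α β x₀ a T : ℝ}
    (hg : IntervalIntegrable g volume α β) (hg0 : ∀ x ∈ Icc α β, 0 ≤ g x) (ha : 0 < a)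
    (haT : a ≤ T) (hα : α ≤ x₀ + a) (hβ : x₀ + T ≤ β)
    (hbound : ∀ x ∈ Icc (x₀ + a) (x₀ + T), 1 / (x - x₀) ≤ g x) :
    Real.log (T / a) ≤ ∫ x in α..β, g x := by
  have haT' : x₀ + a ≤ x₀ + T := by linarith
  calc Real.log (T / a) = ∫ x in a..T, 1 / x :=
        (integral_one_div_of_pos ha (ha.trans_le haT)).symm
    _ = ∫ x in (x₀ + a)..(x₀ + T), 1 / (x - x₀) := by rw [integral_comp_sub_right]; simp
    _ ≤ ∫ x in (x₀ + a)..(x₀ + T), g x := by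
        refine integral_mono_on haT' ?_ (hg.mono_set ?_) hbound
        · refine ContinuousOn.intervalIntegrable_of_Icc haT' fun x hx => ?_
          have : 0 < x - x₀ := by linarith [hx.1]
          fun_prop (disch := positivity)
        · rw [uIcc_of_le haT', uIcc_of_le (hα.trans (haT'.trans hβ))]
          exact Icc_subset_Icc hα hβ
    _ ≤ ∫ x in α..β, g x :=
        integral_mono_interval hα haT' hβ
          ((ae_restrict_iff' measurableSet_Ioc).2
            (.of_forall fun x hx => hg0 x (Ioc_subset_Icc_self hx))) hg

lemma log_div_le_integral_of_one_div_abs_sub_le {g : ℝ → ℝ} {x₀ a T : ℝ}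
    (hg : IntervalIntegrable g volume 0 1) (hg0 : ∀ x ∈ Icc (0 : ℝ) 1, 0 ≤ g x)
    (hx₀ : x₀ ∈ Icc (0 : ℝ) 1) (ha : 0 < a) (haT : a ≤ T) (hT : T ≤ 1 / 2)
    (hbound : ∀ x ∈ Icc (0 : ℝ) 1, a ≤ |x - x₀| → |x - x₀| ≤ T → 1 / |x - x₀| ≤ g x) :
    Real.log (T / a) ≤ ∫ x in (0 : ℝ)..1, g x := by
  rcases le_total x₀ (1 / 2) with hx | hx
  · refine log_div_le_integral_of_one_div_sub_le hg hg0 ha haT (by linarith [hx₀.1]) (by linarith)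
      fun x hx' => ?_
    have hd : |x - x₀| = x - x₀ := abs_of_nonneg (by linarith [hx'.1])
    simpa [hd] using hbound x ⟨by linarith [hx₀.1, hx'.1], by linarith [hx'.2]⟩
      (by linarith [hx'.1]) (by linarith [hx'.2])
  · -- reflect through `1 / 2`
    have hg' : IntervalIntegrable (fun x => g (1 - x)) volume 0 1 := by
      simpa using (hg.comp_sub_left 1).symm
    rw [← show ∫ x in (0 : ℝ)..1, g (1 - x) = ∫ x in (0 : ℝ)..1, g x by
      simp [integral_comp_sub_left]]
    refine log_div_le_integral_of_one_div_sub_le (x₀ := 1 - x₀) hg'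
      (fun x hx' => hg0 _ ⟨by linarith [hx'.2], by linarith [hx'.1]⟩) ha haT
      (by linarith [hx₀.2]) (by linarith)
      fun x hx' => ?_
    have hd : |1 - x - x₀| = x - (1 - x₀) := by
      rw [show 1 - x - x₀ = -(x - (1 - x₀)) by ring, abs_neg]
      exact abs_of_nonneg (by linarith [hx'.1])
    simpa [hd] using hbound (1 - x) ⟨by linarith [hx'.2], by linarith [hx₀.2, hx'.1]⟩
      (by rw [hd]; linarith [hx'.1]) (by rw [hd]; linarith [hx'.2])

section HolderReciprocal

variable {f : ℝ → ℝ} {q K r x₀ : ℝ} (hq : 2 ≤ q) (hK : 0 < K) (hf : ContinuousOn f (Icc 0 1))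
  (hf0 : ∀ x ∈ Icc (0 : ℝ) 1, f x ≠ 0) (hI : ∫ x in (0 : ℝ)..1, 1 / |f x| ^ q ≤ r)
  (hHol : ∀ x ∈ Icc (0 : ℝ) 1, ∀ y ∈ Icc (0 : ℝ) 1, |f x - f y| ≤ K * √|x - y|)
  (hx₀ : x₀ ∈ Icc (0 : ℝ) 1)
include hq hK hf hf0 hI hHol hx₀

lemma log_div_le_of_abs_sub_le_mul_sqrt {a T : ℝ} (ha : 0 < a) (hKa : K * √a = |f x₀|)
    (haT : a ≤ T) (hT : T ≤ min (1 / 2) (1 / (4 * K ^ 2))) :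
    Real.log (T / a) ≤ 4 * K ^ 2 * r := by
  have hint : IntervalIntegrable (fun x => 1 / |f x| ^ q) volume 0 1 :=
    (continuousOn_const.div (hf.abs.rpow_const fun x _ => Or.inr (by linarith))
      fun x hx => (Real.rpow_pos_of_pos (abs_pos.2 (hf0 x hx)) q).ne').intervalIntegrable_of_Icc
        zero_le_one
  calc Real.log (T / a) ≤ ∫ x in (0 : ℝ)..1, 4 * K ^ 2 * (1 / |f x| ^ q) := by
        refine log_div_le_integral_of_one_div_abs_sub_le (hint.const_mul _)
          (fun x _ => by positivity) hx₀ ha haT (hT.trans (min_le_left _ _)) fun x hx h1 h2 => ?_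
        rw [mul_one_div]
        refine one_div_le_div_abs_rpow_of_abs_le_two_mul_sqrt hq (hf0 x hx) (ha.trans_le h1) ?_ ?_
        · calc 4 * K ^ 2 * |x - x₀| ≤ 4 * K ^ 2 * (1 / (4 * K ^ 2)) := by
                gcongr; exact h2.trans (hT.trans (min_le_right _ _))
            _ = 1 := by field_simp
        · calc |f x| ≤ |f x - f x₀| + |f x₀| := by
                linarith [abs_sub_abs_le_abs_sub (f x) (f x₀)]
            _ ≤ K * √|x - x₀| + K * √a := by rw [hKa]; gcongr; exact hHol x hx x₀ hx₀
            _ ≤ 2 * K * √|x - x₀| := by nlinarith [Real.sqrt_le_sqrt h1]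
    _ = 4 * K ^ 2 * ∫ x in (0 : ℝ)..1, 1 / |f x| ^ q := intervalIntegral.integral_const_mul _ _
    _ ≤ 4 * K ^ 2 * r := by gcongr

lemma mul_sqrt_mul_exp_le_abs_of_abs_sub_le_mul_sqrt :
    K * √(min (1 / 2) (1 / (4 * K ^ 2))) * Real.exp (-(2 * r * K ^ 2)) ≤ |f x₀| := by
  set T := min (1 / 2) (1 / (4 * K ^ 2))
  set m := |f x₀|
  have hT : 0 < T := by positivity
  have hr : 0 ≤ r := (integral_nonneg zero_le_one fun x _ => by positivity).trans hI
  rcases le_or_gt (K * √T) m with hm | hm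
  · exact (mul_le_of_le_one_right (by positivity) (Real.exp_le_one_iff.2 (by nlinarith))).trans hm
  set a := (m / K) ^ 2
  have ha : 0 < a := by have := hf0 x₀ hx₀; positivity
  have hKa : K * √a = m := by rw [Real.sqrt_sq (by positivity)]; field_simp
  have haT : a ≤ T := by
    rw [← Real.sqrt_le_sqrt_iff hT.le]
    rw [← hKa] at hm
    exact (lt_of_mul_lt_mul_left hm hK.le).le
  have hlog := log_div_le_of_abs_sub_le_mul_sqrt hq hK hf hf0 hI hHol hx₀ ha hKa haT le_rfl
  have hTa : T * Real.exp (-(4 * r * K ^ 2)) ≤ a := by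
    rw [Real.log_le_iff_le_exp (by positivity), div_le_iff₀ ha] at hlog
    calc T * Real.exp (-(4 * r * K ^ 2))
        ≤ Real.exp (4 * K ^ 2 * r) * a * Real.exp (-(4 * r * K ^ 2)) := by gcongr
      _ = a := by rw [mul_comm _ a, mul_assoc, ← Real.exp_add]; ring_nf; simp
  refine (pow_le_pow_iff_left₀ (by positivity) (abs_nonneg _) two_ne_zero).1 ?_
  calc (K * √T * Real.exp (-(2 * r * K ^ 2))) ^ 2
        = K ^ 2 * (T * Real.exp (-(4 * r * K ^ 2))) := by
        rw [mul_pow, mul_pow, Real.sq_sqrt hT.le, ← Real.exp_nat_mul]; ring_nf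
    _ ≤ K ^ 2 * a := by gcongr
    _ = m ^ 2 := by rw [← hKa, mul_pow, Real.sq_sqrt ha.le]

end HolderReciprocal

theorem strain_lower_bound_general_general (q r₁ r₂ : ℝ) (hq : 2 ≤ q) (hr₂ : 0 < r₂) :
    ∃ c > 0, ∀ z : ℝ → ℝ, ContDiff ℝ 2 z → z 0 = 0 →
      (∀ x ∈ Icc (0:ℝ) 1, deriv z x ≠ 0) →
      (∫ x in (0:ℝ)..1, 1 / |deriv z x| ^ q) ≤ r₁ →
      (∫ x in (0:ℝ)..1, ((z x)^2 + (deriv z x)^2 + (deriv (deriv z) x)^2)) ^ ((1:ℝ)/2) ≤ r₂ →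
      ∀ x ∈ Icc (0:ℝ) 1, c ≤ |deriv z x| := by
  refine ⟨r₂ * √(min (1 / 2) (1 / (4 * r₂ ^ 2))) * Real.exp (-(2 * r₁ * r₂ ^ 2)), by positivity,
    fun z hz _ hz' hI hW x₀ hx₀ => ?_⟩
  have hz1 : ContDiff ℝ 1 (deriv z) := hz.deriv'
  have hz'' : ∫ x in (0:ℝ)..1, deriv (deriv z) x ^ 2 ≤ r₂ ^ 2 :=
    integral_sq_le_of_integral_sum_sq_rpow_le hz.continuous hz1.continuous
      (hz1.continuous_deriv le_rfl) zero_le_one hW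
  exact mul_sqrt_mul_exp_le_abs_of_abs_sub_le_mul_sqrt hq hr₂ hz1.continuous.continuousOn hz' hI
    (fun x hx y hy => abs_sub_le_mul_sqrt_of_integral_deriv_sq_le hz1 hr₂ hz'' hx hy) hx₀

/-- Generalization of the key lower-bound lemma (Remark 3.1): for q ≥ 2, a
bound on ∫₀¹ 1/|z'|^q together with a W^{2,2}(0,1)-norm bound on z with
z(0) = 0 yields a uniform positive lower bound for |z'| on [0,1]. -/
theorem strain_lower_bound_general (q r₁ r₂ : ℝ) (hq : 2 ≤ q) (hr₁ : 0 < r₁) (hr₂ : 0 < r₂) :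
    ∃ c > 0, ∀ z : ℝ → ℝ, ContDiff ℝ 2 z → z 0 = 0 →
      (∀ x ∈ Icc (0:ℝ) 1, deriv z x ≠ 0) →
      (∫ x in (0:ℝ)..1, 1 / |deriv z x| ^ q) ≤ r₁ →
      (∫ x in (0:ℝ)..1, ((z x)^2 + (deriv z x)^2 + (deriv (deriv z) x)^2)) ^ ((1:ℝ)/2) ≤ r₂ →
      ∀ x ∈ Icc (0:ℝ) 1, c ≤ |deriv z x| :=
  strain_lower_bound_general_general q r₁ r₂ hq hr₂
end
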